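/- Let D be the 3 × 21 matrix over ZMod 4 whose rows are (1,2,2,2,0,3,3,2,0,3,1,3,1,1,1,0,0,1,2,3,1), (0,3,3,0,2,3,1,1,3,3,3,0,0,2,0,1,0,3,3,3,2), and (2,2,0,3,3,2,0,3,1,3,1,1,1,2,0,0,1,2,3,1,1). Then the set C = {c ∈ (ZMod 4)^{21} : D cᵀ = 0} is an additive 1-perfect code in ℤ4^{14} × ℤ4^{7} with respect to the Doob D(7,7)-metric. -/

import Mathlib

/-!
The Doob graph is a Cayley graph of `ℤ₄²¹`: `v` and `c` are adjacent iff `v - c` is adjacent to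
`0`. Hence the kernel of the syndrome map `u ↦ D u` is a 1-perfect code as soon as the syndrome
map is a bijection from the closed unit ball around `0` onto `ℤ₄³`. That ball consists of `0`, the
`7 · 6` Shrikhande moves and the `7 · 3` `K₄` moves, i.e. `64 = |ℤ₄³|` vectors, so it suffices
that their syndromes are pairwise distinct, which is a finite computation.
-/

open SimpleGraph

/-- The box (Cartesian) product of an indexed family of simple graphs. -/
def boxPi {ι : Type*} {V : ι → Type*} (G : ∀ i, SimpleGraph (V i)) :
    SimpleGraph (∀ i, V i) where
  Adj x y := ∃ i, (G i).Adj (x i) (y i) ∧ ∀ j, j ≠ i → x j = y j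
  symm := by
    constructor
    rintro x y ⟨i, h, he⟩
    exact ⟨i, (G i).adj_symm h, fun j hj => (he j hj).symm⟩
  loopless := by
    constructor
    rintro x ⟨i, h, -⟩
    exact (G i).irrefl h

/-- The Shrikhande graph on `(ZMod 4) × (ZMod 4)`. -/
def Shri : SimpleGraph (ZMod 4 × ZMod 4) where
  Adj a b := a - b ∈
    ({(0, 1), (1, 0), (1, 1), (0, 3), (3, 0), (3, 3)} : Finset (ZMod 4 × ZMod 4))
  symm := by
    constructor
    have h : ∀ a b : ZMod 4 × ZMod 4,
        a - b ∈ ({(0, 1), (1, 0), (1, 1), (0, 3), (3, 0), (3, 3)} :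
          Finset (ZMod 4 × ZMod 4)) →
        b - a ∈ ({(0, 1), (1, 0), (1, 1), (0, 3), (3, 0), (3, 3)} :
          Finset (ZMod 4 × ZMod 4)) := by decide
    exact fun a b hab => h a b hab
  loopless := by
    constructor
    intro a h
    rw [sub_self] at h
    revert h
    decide

/-- `C` is a 1-perfect code in `G`: every vertex is at graph distance at most 1
(i.e., equal or adjacent) from exactly one element of `C`. -/
def IsPerfectCode {V : Type*} (G : SimpleGraph V) (C : Set V) : Prop :=
  ∀ v : V, ∃! c : V, c ∈ C ∧ (v = c ∨ G.Adj v c)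

/-- The Doob graph `D(7,7)` on `ℤ₄^{14} × ℤ₄^{7}`, the pairs of the first `14`
coordinates being grouped together. -/
def Doob77 : SimpleGraph ((Fin 7 → ZMod 4 × ZMod 4) × (Fin 7 → ZMod 4)) :=
  (boxPi fun _ : Fin 7 => Shri) □ (boxPi fun _ : Fin 7 => (⊤ : SimpleGraph (ZMod 4)))

/-- The identification of `(ZMod 4)^{21}` with `ℤ₄^{14} × ℤ₄^{7}`:
the first `14` coordinates are grouped into consecutive pairs. -/
def toDoob77 (c : Fin 21 → ZMod 4) : (Fin 7 → ZMod 4 × ZMod 4) × (Fin 7 → ZMod 4) :=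
  (fun i => (c ⟨2 * i.val, by have := i.isLt; omega⟩,
             c ⟨2 * i.val + 1, by have := i.isLt; omega⟩),
   fun i => c ⟨14 + i.val, by have := i.isLt; omega⟩)

/-- The Doob graph `D(7,7)` transported to the vertex set `(ZMod 4)^{21}`. -/
def Doob77On21 : SimpleGraph (Fin 21 → ZMod 4) :=
  SimpleGraph.comap toDoob77 Doob77

/-- The check matrix. -/
def Dmat : Matrix (Fin 3) (Fin 21) (ZMod 4) :=
  !![1,2,2,2,0,3,3,2,0,3,1,3,1,1,1,0,0,1,2,3,1;
     0,3,3,0,2,3,1,1,3,3,3,0,0,2,0,1,0,3,3,3,2;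
     2,2,0,3,3,2,0,3,1,3,1,1,1,2,0,0,1,2,3,1,1]

theorem List.existsUnique_of_nodup_map_of_card_le {α β : Type*} [Fintype β] [DecidableEq β]
    {l : List α} {f : α → β} (hl : (l.map f).Nodup) (hcard : Fintype.card β ≤ l.length)
    (b : β) : ∃! a, a ∈ l ∧ f a = b := by
  have hcard' : (l.map f).toFinset.card = Fintype.card β := by
    rw [List.toFinset_card_of_nodup hl, List.length_map]
    exact le_antisymm (List.length_map f ▸ hl.length_le_card) hcard
  have hb : b ∈ (l.map f).toFinset := by
    rw [Finset.eq_univ_of_card _ hcard']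
    exact Finset.mem_univ b
  obtain ⟨a, ha, rfl⟩ := List.mem_map.mp (List.mem_toFinset.mp hb)
  exact ⟨a, ⟨ha, rfl⟩, fun a' ⟨ha', hfa'⟩ => List.inj_on_of_nodup_map hl ha' ha hfa'⟩

namespace SimpleGraph

section TranslationInvariant

variable {V W : Type*} [AddGroup V] [AddGroup W]

def IsTranslationInvariant (G : SimpleGraph V) : Prop :=
  ∀ x y : V, G.Adj x y ↔ G.Adj (x - y) 0

theorem IsTranslationInvariant.comap {G : SimpleGraph W} (hG : G.IsTranslationInvariant)
    (f : V →+ W) : (G.comap f).IsTranslationInvariant := fun x y => by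
  simp only [comap_adj, map_sub, map_zero]
  exact hG _ _

theorem IsTranslationInvariant.boxProd {G : SimpleGraph V} {H : SimpleGraph W}
    (hG : G.IsTranslationInvariant) (hH : H.IsTranslationInvariant) :
    (G □ H).IsTranslationInvariant := fun x y => by
  simp only [boxProd_adj, hG x.1, hH x.2, Prod.fst_sub, Prod.snd_sub, Prod.fst_zero,
    Prod.snd_zero, sub_eq_zero]

theorem isTranslationInvariant_top : (⊤ : SimpleGraph V).IsTranslationInvariant := fun x y => by
  simp [sub_eq_zero]

theorem IsTranslationInvariant.eq_or_adj_iff {G : SimpleGraph V} (hG : G.IsTranslationInvariant)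
    (v c : V) :
    (v = c ∨ G.Adj v c) ↔ (v - c = 0 ∨ G.Adj (v - c) 0) := by
  rw [hG, sub_eq_zero]

end TranslationInvariant

section BoxPi

variable {ι : Type*} {V : ι → Type*} {G : ∀ i, SimpleGraph (V i)}

@[simp]
theorem boxPi_adj {x y : ∀ i, V i} :
    (boxPi G).Adj x y ↔ ∃ i, (G i).Adj (x i) (y i) ∧ ∀ j, j ≠ i → x j = y j :=
  Iff.rfl

theorem isTranslationInvariant_boxPi [∀ i, AddGroup (V i)]
    (hG : ∀ i, (G i).IsTranslationInvariant) : (boxPi G).IsTranslationInvariant :=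
  fun x y => by simp only [boxPi_adj, Pi.sub_apply, Pi.zero_apply, sub_eq_zero, hG _ (x _)]

theorem boxPi_adj_zero_iff [DecidableEq ι] [∀ i, Zero (V i)] {x : ∀ i, V i} :
    (boxPi G).Adj x 0 ↔ ∃ i s, (G i).Adj s 0 ∧ x = Pi.single i s := by
  constructor
  · rintro ⟨i, hi, hj⟩
    refine ⟨i, x i, hi, funext fun j => ?_⟩
    rcases eq_or_ne j i with rfl | hji
    · simp
    · simp [hji, hj j hji]
  · rintro ⟨i, s, hs, rfl⟩
    exact ⟨i, by simpa using hs, fun j hj => by simp [hj]⟩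

end BoxPi

section PerfectCode

variable {V W : Type*} [AddCommGroup V] [AddGroup W] {G : SimpleGraph V}

theorem IsTranslationInvariant.isPerfectCode_ker [Fintype W] [DecidableEq W]
    (hG : G.IsTranslationInvariant) (φ : V →+ W) (ball : List V)
    (hball : ∀ u, u ∈ ball ↔ u = 0 ∨ G.Adj u 0) (hφ : (ball.map φ).Nodup)
    (hcard : Fintype.card W ≤ ball.length) : IsPerfectCode G {c | φ c = 0} := by
  intro v
  obtain ⟨u, ⟨hu, hφu⟩, huniq⟩ := List.existsUnique_of_nodup_map_of_card_le hφ hcard (φ v)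
  refine ⟨v - u, ⟨by simp [hφu], by rwa [hG.eq_or_adj_iff, sub_sub_cancel, ← hball]⟩, ?_⟩
  rintro c ⟨hc, hvc⟩
  have hvc' : v - c ∈ ball := (hball _).mpr ((hG.eq_or_adj_iff v c).mp hvc)
  have : v - c = u := huniq _ ⟨hvc', by simp [show φ c = 0 from hc]⟩
  rw [← this, sub_sub_cancel]

end PerfectCode

end SimpleGraph

open SimpleGraph

theorem isTranslationInvariant_Shri : Shri.IsTranslationInvariant := fun a b => by
  show _ ∈ _ ↔ _ ∈ _
  rw [sub_zero]

def ofDoob77 (x : (Fin 7 → ZMod 4 × ZMod 4) × (Fin 7 → ZMod 4)) : Fin 21 → ZMod 4 :=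
  fun j => if h : j.val < 14 then
      (if j.val % 2 = 0 then (x.1 ⟨j.val / 2, by omega⟩).1 else (x.1 ⟨j.val / 2, by omega⟩).2)
    else x.2 ⟨j.val - 14, by omega⟩

def doob77Equiv : (Fin 21 → ZMod 4) ≃+ (Fin 7 → ZMod 4 × ZMod 4) × (Fin 7 → ZMod 4) where
  toFun := toDoob77
  invFun := ofDoob77
  left_inv c := funext fun j => by fin_cases j <;> rfl
  right_inv x :=
    Prod.ext (funext fun i => by fin_cases i <;> rfl) (funext fun i => by fin_cases i <;> rfl)
  map_add' _ _ := rfl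

theorem isTranslationInvariant_doob77On21 : Doob77On21.IsTranslationInvariant :=
  ((isTranslationInvariant_boxPi fun _ => isTranslationInvariant_Shri).boxProd
    (isTranslationInvariant_boxPi fun _ => isTranslationInvariant_top)).comap
    doob77Equiv.toAddMonoidHom

instance : DecidableRel Shri.Adj := fun a b => by unfold Shri; infer_instance

def shriNbrs : List (ZMod 4 × ZMod 4) := [(0, 1), (1, 0), (1, 1), (0, 3), (3, 0), (3, 3)]

theorem mem_shriNbrs_iff : ∀ s, s ∈ shriNbrs ↔ Shri.Adj s 0 := by decide

def k4Nbrs : List (ZMod 4) := [1, 2, 3]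

theorem mem_k4Nbrs_iff : ∀ a, a ∈ k4Nbrs ↔ a ≠ 0 := by decide

def doob77Ball : List ((Fin 7 → ZMod 4 × ZMod 4) × (Fin 7 → ZMod 4)) :=
  0 :: ((List.finRange 7).flatMap fun i => shriNbrs.map fun s => (Pi.single i s, 0)) ++
    ((List.finRange 7).flatMap fun k => k4Nbrs.map fun a => (0, Pi.single k a))

theorem mem_doob77Ball_iff (x : (Fin 7 → ZMod 4 × ZMod 4) × (Fin 7 → ZMod 4)) :
    x ∈ doob77Ball ↔ x = 0 ∨ Doob77.Adj x 0 := by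
  obtain ⟨y, z⟩ := x
  simp only [doob77Ball, List.mem_cons, List.mem_append, List.mem_flatMap, List.mem_map,
    List.mem_finRange, true_and, mem_shriNbrs_iff, mem_k4Nbrs_iff, Doob77, boxProd_adj,
    boxPi_adj_zero_iff, top_adj, Prod.mk.injEq, Prod.fst_zero, Prod.snd_zero]
  aesop

set_option maxRecDepth 10000 in
theorem nodup_map_mulVec_doob77Ball :
    ((doob77Ball.map doob77Equiv.symm).map Dmat.mulVec).Nodup := by
  decide

theorem card_le_length_doob77Ball :
    Fintype.card (Fin 3 → ZMod 4) ≤ (doob77Ball.map doob77Equiv.symm).length := by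
  simp [doob77Ball, shriNbrs, k4Nbrs]

theorem mem_map_doob77Ball_iff (u : Fin 21 → ZMod 4) :
    u ∈ doob77Ball.map doob77Equiv.symm ↔ u = 0 ∨ Doob77On21.Adj u 0 := by
  have hadj : Doob77On21.Adj u 0 ↔ Doob77.Adj (doob77Equiv u) 0 := by
    rw [← map_zero doob77Equiv]
    rfl
  rw [hadj, ← map_eq_zero_iff doob77Equiv doob77Equiv.injective, ← mem_doob77Ball_iff]
  simp only [List.mem_map, AddEquiv.symm_apply_eq, exists_eq_right]

theorem additive_perfect_code_in_D77 :
    (∃ H : AddSubgroup (Fin 21 → ZMod 4),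
        {c : Fin 21 → ZMod 4 | Dmat.mulVec c = 0} = (H : Set (Fin 21 → ZMod 4))) ∧
    IsPerfectCode Doob77On21 {c : Fin 21 → ZMod 4 | Dmat.mulVec c = 0} := by
  refine ⟨⟨Dmat.mulVecLin.toAddMonoidHom.ker, rfl⟩, ?_⟩
  exact isTranslationInvariant_doob77On21.isPerfectCode_ker Dmat.mulVecLin.toAddMonoidHom _
    mem_map_doob77Ball_iff nodup_map_mulVec_doob77Ball
    card_le_length_doob77Ball
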